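/- Let L be a real m×m symmetric positive semidefinite matrix with L · 1 = 0 (m ≥ 2), and let λ_1 ≤ λ_2 ≤ … ≤ λ_m be its eigenvalues in nondecreasing order. Then ‖I − L − J‖ = max(1 − λ_2, λ_m − 1), where I is the identity matrix, J is the m×m matrix with all entries 1/m, and ‖·‖ is the spectral norm. -/

import Mathlib

open Matrix

noncomputable def Jmat (m : ℕ) : Matrix (Fin m) (Fin m) ℝ :=
  Matrix.of fun _ _ => (1 : ℝ) / m

noncomputable def specNorm {m : ℕ} (M : Matrix (Fin m) (Fin m) ℝ) : ℝ :=
  ‖(Matrix.toEuclideanCLM (𝕜 := ℝ) M :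
      EuclideanSpace ℝ (Fin m) →L[ℝ] EuclideanSpace ℝ (Fin m))‖

/-!
Write `u` for the all-ones vector. Since `L u = 0`, the matrix `I - L - J` equals `(I - L) P`,
where `P = I - J` is the orthogonal projection onto `u^⊥`, so its norm is the norm of `I - L`
on `u^⊥`. In an orthonormal eigenbasis `b₁, …, b_m` of `L` with sorted eigenvalues (so `λ₁ = 0`),
`u` has no component along an eigenvector with nonzero eigenvalue, and
`‖(I - L) w‖² = ∑ (1 - λᵢ)² ⟪bᵢ, w⟫²`.

Upper bound: `|1 - λᵢ| ≤ max (1 - λ₂) (λ_m - 1)` unless `λᵢ = 0 < λ₂`; but then `u` is a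
multiple of `b₁ = bᵢ`, so `⟪bᵢ, w⟫ = 0` for `w ⊥ u`.
Lower bound: `b_m ⊥ u` when `λ_m ≠ 0`, and some nonzero combination of `b₁, b₂` is orthogonal
to `u`; `I - L` stretches it by at least `1 - λ₂`.
-/

open scoped RealInnerProductSpace

namespace OrthonormalBasis

variable {ι E : Type*} [Fintype ι] [NormedAddCommGroup E] [InnerProductSpace ℝ E]
  (b : OrthonormalBasis ι ℝ E) {T : E →ₗ[ℝ] E} {μ : ι → ℝ}

lemma inner_apply_of_apply_eq_smul (hT : ∀ i, T (b i) = μ i • b i) (v : E) (i : ι) :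
    ⟪b i, T v⟫ = μ i * ⟪b i, v⟫ := by
  classical
  conv_lhs => rw [← b.sum_repr' v]
  simp [hT, inner_sum, real_inner_smul_right, b.inner_eq_ite, mul_comm]

lemma norm_sq_apply_of_apply_eq_smul (hT : ∀ i, T (b i) = μ i • b i) (v : E) :
    ‖T v‖ ^ 2 = ∑ i, (μ i * ⟪b i, v⟫) ^ 2 := by
  simp only [← b.sum_sq_inner_right, b.inner_apply_of_apply_eq_smul hT]

lemma norm_apply_le_of_apply_eq_smul (hT : ∀ i, T (b i) = μ i • b i) {r : ℝ} (hr : 0 ≤ r)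
    {v : E} (hv : ∀ i, ⟪b i, v⟫ ≠ 0 → |μ i| ≤ r) : ‖T v‖ ≤ r * ‖v‖ := by
  refine le_of_sq_le_sq ?_ (by positivity)
  rw [mul_pow, b.norm_sq_apply_of_apply_eq_smul hT, ← b.sum_sq_inner_right, Finset.mul_sum]
  refine Finset.sum_le_sum fun i _ => ?_
  by_cases h : ⟪b i, v⟫ = 0
  · simp [h]
  · rw [mul_pow, ← sq_abs (μ i)]
    gcongr
    exact hv i h

lemma mul_norm_le_norm_apply_of_apply_eq_smul (hT : ∀ i, T (b i) = μ i • b i) {s : ℝ}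
    (hs : 0 ≤ s) {v : E} (hv : ∀ i, ⟪b i, v⟫ ≠ 0 → s ≤ |μ i|) : s * ‖v‖ ≤ ‖T v‖ := by
  refine le_of_sq_le_sq ?_ (norm_nonneg _)
  rw [mul_pow, b.norm_sq_apply_of_apply_eq_smul hT, ← b.sum_sq_inner_right, Finset.mul_sum]
  refine Finset.sum_le_sum fun i _ => ?_
  by_cases h : ⟪b i, v⟫ = 0
  · simp [h]
  · rw [mul_pow, ← sq_abs (μ i)]
    gcongr
    exact hv i h

lemma inner_eq_zero_of_apply_eq_zero (hT : ∀ i, T (b i) = μ i • b i) {u : E} (hu : T u = 0)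
    {i : ι} (hi : μ i ≠ 0) : ⟪b i, u⟫ = 0 := by
  simpa [hu, hi] using (b.inner_apply_of_apply_eq_smul hT u i).symm

lemma exists_eq_zero_of_apply_eq_zero (hT : ∀ i, T (b i) = μ i • b i) {u : E} (hu₀ : u ≠ 0)
    (hu : T u = 0) : ∃ i, μ i = 0 := by
  by_contra! h
  refine hu₀ ?_
  rw [← b.sum_repr' u]
  simp [b.inner_eq_zero_of_apply_eq_zero hT hu (h _)]

lemma inner_eq_zero_of_inner_eq_zero {u w : E} {k : ι} (hu : u ≠ 0)
    (hk : ∀ j ≠ k, ⟪b j, u⟫ = 0) (huw : ⟪u, w⟫ = 0) : ⟪b k, w⟫ = 0 := by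
  have hu_eq : u = ⟪b k, u⟫ • b k := by
    conv_lhs => rw [← b.sum_repr' u]
    exact Finset.sum_eq_single k (fun j _ hj => by rw [hk j hj, zero_smul]) (by simp)
  have hc : ⟪b k, u⟫ ≠ 0 := fun h => hu (by rw [hu_eq, h, zero_smul])
  rw [hu_eq, real_inner_smul_left] at huw
  exact (mul_eq_zero.1 huw).resolve_left hc

lemma exists_ne_zero_inner_eq_zero_of_ne (u : E) {i j : ι} (hij : i ≠ j) :
    ∃ w : E, w ≠ 0 ∧ ⟪u, w⟫ = 0 ∧ ∀ k, ⟪b k, w⟫ ≠ 0 → k = i ∨ k = j := by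
  classical
  obtain ⟨a, c, hac, horth⟩ :
      ∃ a c : ℝ, (a ≠ 0 ∨ c ≠ 0) ∧ a * ⟪u, b i⟫ + c * ⟪u, b j⟫ = 0 := by
    by_cases hp : ⟪u, b i⟫ = 0
    · exact ⟨1, 0, by simp, by simp [hp]⟩
    · exact ⟨⟪u, b j⟫, -⟪u, b i⟫, Or.inr (neg_ne_zero.2 hp), by ring⟩
  have hcoord : ∀ k, ⟪b k, a • b i + c • b j⟫ =
      (if k = i then a else 0) + (if k = j then c else 0) := fun k => by
    simp [inner_add_right, real_inner_smul_right, b.inner_eq_ite, eq_comm]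
  refine ⟨a • b i + c • b j, fun hw => ?_, ?_, fun k hk => ?_⟩
  · have ha := hcoord i
    have hc := hcoord j
    simp only [hw, inner_zero_right, ↓reduceIte, hij, hij.symm, add_zero, zero_add] at ha hc
    exact hac.elim (· ha.symm) (· hc.symm)
  · rw [inner_add_right, real_inner_smul_right, real_inner_smul_right, horth]
  · by_contra! h
    simp [hcoord, h.1, h.2] at hk

end OrthonormalBasis

namespace ContinuousLinearMap

variable {𝕜 E F : Type*} [RCLike 𝕜] [NormedAddCommGroup E] [InnerProductSpace 𝕜 E]
  [NormedAddCommGroup F] [NormedSpace 𝕜 F] (K : Submodule 𝕜 E) [K.HasOrthogonalProjection]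

lemma one_sub_sub_starProjection_eq_comp (T : E →L[𝕜] E) (hK : ∀ x ∈ K, T x = 0) :
    1 - T - K.starProjection = (1 - T) ∘L Kᗮ.starProjection := by
  ext v
  simp only [_root_.sub_apply, one_apply_eq_self, sub_comp, comp_apply,
    Submodule.starProjection_orthogonal_val, map_sub, hK _ (K.starProjection_apply_mem v), sub_zero]
  abel

lemma norm_comp_starProjection_le (S : E →L[𝕜] F) {r : ℝ} (hr : 0 ≤ r)
    (hS : ∀ w ∈ K, ‖S w‖ ≤ r * ‖w‖) : ‖S ∘L K.starProjection‖ ≤ r :=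
  opNorm_le_bound _ hr fun v => (hS _ (K.starProjection_apply_mem v)).trans <| by
    gcongr
    exact K.norm_starProjection_apply_le v

lemma norm_apply_le_norm_comp_starProjection_mul (S : E →L[𝕜] F) {w : E} (hw : w ∈ K) :
    ‖S w‖ ≤ ‖S ∘L K.starProjection‖ * ‖w‖ := by
  simpa [K.starProjection_eq_self_iff.2 hw] using (S ∘L K.starProjection).le_opNorm w

end ContinuousLinearMap

lemma max_one_sub_sub_one_nonneg {a b : ℝ} (h : a ≤ b) : 0 ≤ max (1 - a) (b - 1) := by
  rcases le_total a 1 with h₁ | h₁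
  · exact le_max_of_le_left (by linarith)
  · exact le_max_of_le_right (by linarith)

lemma abs_one_sub_le_max {a b x : ℝ} (hax : a ≤ x) (hxb : x ≤ b) :
    |1 - x| ≤ max (1 - a) (b - 1) :=
  abs_sub_le_iff.2 ⟨le_max_of_le_left (by linarith), le_max_of_le_right (by linarith)⟩

section SortedEigenbasis

variable {E : Type*} [NormedAddCommGroup E] [InnerProductSpace ℝ E] {n : ℕ}
  {b : OrthonormalBasis (Fin (n + 2)) ℝ E} {T : E →L[ℝ] E} {lam : Fin (n + 2) → ℝ} {u : E}

lemma eigenvalue_zero_eq_zero (hT : ∀ i, T (b i) = lam i • b i) (hmono : Monotone lam)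
    (hnonneg : ∀ i, 0 ≤ lam i) (hu : u ≠ 0) (hTu : T u = 0) : lam 0 = 0 := by
  obtain ⟨i, hi⟩ := b.exists_eq_zero_of_apply_eq_zero (T := (T : E →ₗ[ℝ] E)) hT hu hTu
  exact le_antisymm (hi ▸ hmono (Fin.zero_le i)) (hnonneg 0)

lemma norm_one_sub_apply_le_of_inner_eq_zero (hT : ∀ i, T (b i) = lam i • b i)
    (hmono : Monotone lam) (hnonneg : ∀ i, 0 ≤ lam i) (hu : u ≠ 0) (hTu : T u = 0) {w : E}
    (huw : ⟪u, w⟫ = 0) :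
    ‖(1 - T) w‖ ≤ max (1 - lam 1) (lam (Fin.last (n + 1)) - 1) * ‖w‖ := by
  have hlam₀ := eigenvalue_zero_eq_zero hT hmono hnonneg hu hTu
  have hlam₁ : ∀ i ≠ 0, lam 1 ≤ lam i := fun i hi => hmono (Fin.one_le_of_ne_zero hi)
  have hr := max_one_sub_sub_one_nonneg (hmono (Fin.le_last 1))
  refine b.norm_apply_le_of_apply_eq_smul (T := ((1 - T : E →L[ℝ] E) : E →ₗ[ℝ] E))
    (μ := fun i => 1 - lam i) (fun i => by simp [hT, sub_smul]) hr fun i hi => ?_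
  by_cases hi₀ : i = 0
  · suffices lam 1 = 0 by simp [hi₀, hlam₀, this]
    -- otherwise `u` is a multiple of `b 0`
    by_contra h₁
    refine hi (hi₀ ▸ b.inner_eq_zero_of_inner_eq_zero hu (fun j hj => ?_) huw)
    exact b.inner_eq_zero_of_apply_eq_zero (T := (T : E →ₗ[ℝ] E)) hT hTu
      (((hnonneg 1).lt_of_ne' h₁).trans_le (hlam₁ j hj)).ne'
  · exact abs_one_sub_le_max (hlam₁ i hi₀) (hmono (Fin.le_last i))

lemma le_norm_one_sub_comp_starProjection (hT : ∀ i, T (b i) = lam i • b i)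
    (hmono : Monotone lam) (hnonneg : ∀ i, 0 ≤ lam i) (hu : u ≠ 0) (hTu : T u = 0) :
    max (1 - lam 1) (lam (Fin.last (n + 1)) - 1) ≤ ‖(1 - T) ∘L (ℝ ∙ u)ᗮ.starProjection‖ := by
  have hlam₀ := eigenvalue_zero_eq_zero hT hmono hnonneg hu hTu
  have hlower : ∀ {s : ℝ} {w : E}, 0 ≤ s → w ≠ 0 → ⟪u, w⟫ = 0 →
      (∀ i, ⟪b i, w⟫ ≠ 0 → s ≤ |1 - lam i|) → s ≤ ‖(1 - T) ∘L (ℝ ∙ u)ᗮ.starProjection‖ := by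
    intro s w hs hw huw hsupp
    refine le_of_mul_le_mul_right ?_ (norm_pos_iff.2 hw)
    calc s * ‖w‖ ≤ ‖(1 - T) w‖ :=
          b.mul_norm_le_norm_apply_of_apply_eq_smul (T := ((1 - T : E →L[ℝ] E) : E →ₗ[ℝ] E))
            (μ := fun i => 1 - lam i) (fun i => by simp [hT, sub_smul]) hs hsupp
      _ ≤ _ := ContinuousLinearMap.norm_apply_le_norm_comp_starProjection_mul _ _
          (Submodule.mem_orthogonal_singleton_iff_inner_right.2 huw)
  refine max_le ?_ ?_
  · rcases le_or_gt 1 (lam 1) with h₁ | h₁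
    · exact (sub_nonpos.2 h₁).trans (norm_nonneg _)
    obtain ⟨w, hw, huw, hsupp⟩ := b.exists_ne_zero_inner_eq_zero_of_ne u (zero_ne_one' (Fin (n + 2)))
    refine hlower (by linarith) hw huw fun i hi => ?_
    rcases hsupp i hi with rfl | rfl
    · simp only [hlam₀, sub_zero, abs_one]
      linarith [hnonneg 1]
    · rw [abs_of_pos (by linarith)]
  · rcases le_or_gt (lam (Fin.last (n + 1))) 1 with hₙ | hₙ
    · exact (sub_nonpos.2 hₙ).trans (norm_nonneg _)
    refine hlower (by linarith) (b.orthonormal.ne_zero (Fin.last (n + 1))) ?_ fun i hi => ?_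
    · rw [real_inner_comm]
      exact b.inner_eq_zero_of_apply_eq_zero (T := (T : E →ₗ[ℝ] E)) hT hTu (by linarith)
    · have : i = Fin.last (n + 1) := by
        classical
        by_contra h
        simp [b.inner_eq_ite, h] at hi
      rw [this, abs_sub_comm, abs_of_pos (by linarith)]

theorem norm_one_sub_sub_starProjection_span_singleton (hT : ∀ i, T (b i) = lam i • b i)
    (hmono : Monotone lam) (hnonneg : ∀ i, 0 ≤ lam i) (hu : u ≠ 0) (hTu : T u = 0) :
    ‖1 - T - (ℝ ∙ u).starProjection‖ = max (1 - lam 1) (lam (Fin.last (n + 1)) - 1) := by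
  have hr := max_one_sub_sub_one_nonneg (hmono (Fin.le_last 1))
  have hK : ∀ x ∈ ℝ ∙ u, T x = 0 := fun x hx => by
    obtain ⟨c, rfl⟩ := Submodule.mem_span_singleton.1 hx
    simp [hTu]
  rw [ContinuousLinearMap.one_sub_sub_starProjection_eq_comp _ T hK]
  refine le_antisymm (ContinuousLinearMap.norm_comp_starProjection_le _ _ hr fun w hw => ?_)
    (le_norm_one_sub_comp_starProjection hT hmono hnonneg hu hTu)
  exact norm_one_sub_apply_le_of_inner_eq_zero hT hmono hnonneg hu hTu
    (Submodule.mem_orthogonal_singleton_iff_inner_right.1 hw)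

end SortedEigenbasis

lemma toEuclideanCLM_Jmat (m : ℕ) :
    toEuclideanCLM (𝕜 := ℝ) (Jmat m) =
      (ℝ ∙ WithLp.toLp 2 (fun _ : Fin m => (1 : ℝ))).starProjection := by
  ext v i
  rw [Submodule.starProjection_singleton]
  simp [Jmat, mulVec, dotProduct, EuclideanSpace.norm_sq_eq, PiLp.inner_apply, Finset.mul_sum,
    div_eq_inv_mul]

/-- for a real m×m symmetric positive semidefinite `L` with `L · 1 = 0`
(`m ≥ 2`), writing `lam 0 ≤ lam 1 ≤ … ≤ lam (m-1)` for its eigenvalues in nondecreasing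
order, the spectral norm satisfies `‖I − L − J‖ = max (1 − λ₂) (λ_m − 1)`. -/
theorem specNorm_I_sub_lap_sub_J {m : ℕ} (hm : 2 ≤ m)
    (L : Matrix (Fin m) (Fin m) ℝ) (hL : L.PosSemidef)
    (hL1 : L *ᵥ (fun _ => (1 : ℝ)) = 0)
    (lam : Fin m → ℝ) (hmono : Monotone lam)
    (hperm : ∃ σ : Equiv.Perm (Fin m), lam = hL.isHermitian.eigenvalues ∘ σ) :
    specNorm ((1 : Matrix (Fin m) (Fin m) ℝ) - L - Jmat m)
      = max (1 - lam ⟨1, by omega⟩) (lam ⟨m - 1, by omega⟩ - 1) := by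
  obtain ⟨n, rfl⟩ := Nat.exists_eq_add_of_le' hm
  obtain ⟨σ, rfl⟩ := hperm
  set b := hL.isHermitian.eigenvectorBasis.reindex σ.symm
  have hb : ∀ j, toEuclideanCLM (𝕜 := ℝ) L (b j) = (hL.isHermitian.eigenvalues ∘ σ) j • b j :=
    fun j => WithLp.ofLp_injective 2 (by simp [b, hL.isHermitian.mulVec_eigenvectorBasis])
  have hu : WithLp.toLp 2 (fun _ : Fin (n + 2) => (1 : ℝ)) ≠ 0 := fun h => by
    simpa using congr(WithLp.ofLp $h 0)
  rw [specNorm, map_sub, map_sub, map_one, toEuclideanCLM_Jmat,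
    norm_one_sub_sub_starProjection_span_singleton hb hmono (fun _ => hL.eigenvalues_nonneg _) hu
      (by simp [hL1])]
  rfl
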